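/- Let u = s₁…s_N be a word over {a,a⁻¹,d,d⁻¹} with a palindrome-pattern ι, and let i₀ < j₀ be adjacent indices (j₀ = i₀ + 1) with s_{j₀} ∈ {s_{i₀}, s_{i₀}⁻¹} and {i₀,j₀} not an ι-pair, i.e. ι(i₀) ≠ j₀. Define ι_new to agree with ι except that ι_new(i₀) = j₀, ι_new(j₀) = i₀, ι_new(ι(i₀)) = ι(j₀), and ι_new(ι(j₀)) = ι(i₀). Then ι_new is again a palindrome-pattern on u. -/

import Mathlib

/-- The four-letter alphabet `{a, a⁻¹, d, d⁻¹}`. -/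
inductive ADLetter : Type
  | a : ADLetter
  | ainv : ADLetter
  | d : ADLetter
  | dinv : ADLetter
deriving DecidableEq

/-- The formal inverse on the alphabet. -/
def ADLetter.inv : ADLetter → ADLetter
  | .a => .ainv
  | .ainv => .a
  | .d => .dinv
  | .dinv => .d

/-- `ι` is a palindrome-pattern on the word `w`. -/
def IsPalPattern (w : List ADLetter) (ι : Equiv.Perm (Fin w.length)) : Prop :=
  (∀ i, ι i ≠ i) ∧ (∀ i, ι (ι i) = i) ∧
  (∀ i, w.get (ι i) = w.get i ∨ w.get (ι i) = (w.get i).inv) ∧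
  (∀ i j, min i (ι i) < j → j < max i (ι i) → min i (ι i) < ι j ∧ ι j < max i (ι i))

/-!
View `ι` as a non-crossing family of chords `{i, ι i}`; the repair replaces the chords
`{i₀, ι i₀}` and `{j₀, ι j₀}` by `{i₀, j₀}` and `{ι i₀, ι j₀}`. As `i₀ ⋖ j₀`, no point lies
strictly inside `{i₀, j₀}`, and `i₀`, `j₀` lie on the same side of every chord not ending at them,
so the untouched chords remain uncrossed. A point `x` distinct from `p` and `q` lies strictly
between them iff exactly one of `p < x`, `q < x` holds; hence, away from the four endpoints,
lying inside `{ι i₀, ι j₀}` is the XOR of lying inside `{i₀, ι i₀}` and inside `{j₀, ι j₀}`,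
and `ι` preserves both of these.
-/

open Function Set

section Chords

variable {α : Type*} [LinearOrder α] {a b c d x : α}

theorem Set.mem_uIoo_iff_xor (hxa : x ≠ a) (hxb : x ≠ b) :
    x ∈ uIoo a b ↔ Xor (a < x) (b < x) := by
  rcases hxa.lt_or_gt with hxa | hxa <;> rcases hxb.lt_or_gt with hxb | hxb <;>
    simp [uIoo, hxa, hxb, hxa.not_gt, hxb.not_gt, Xor]

theorem CovBy.lt_left_iff_lt_right (h : a ⋖ b) (hxa : x ≠ a) : x < a ↔ x < b :=
  ⟨fun hx => hx.trans h.lt, fun hx => (h.le_of_lt hx).lt_of_ne hxa⟩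

theorem CovBy.left_lt_iff_right_lt (h : a ⋖ b) (hxb : x ≠ b) : a < x ↔ b < x :=
  ⟨fun hx => (le_of_not_gt fun hxb' => (h.le_of_lt hxb').not_gt hx).lt_of_ne' hxb,
    h.lt.trans⟩

theorem CovBy.mem_uIoo_iff (h : a ⋖ b) (hac : a ≠ c) (had : a ≠ d) (hbc : b ≠ c)
    (hbd : b ≠ d) : a ∈ uIoo c d ↔ b ∈ uIoo c d := by
  rw [mem_uIoo_iff_xor hac had, mem_uIoo_iff_xor hbc hbd, h.lt_left_iff_lt_right hac.symm,
    h.lt_left_iff_lt_right had.symm]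

theorem CovBy.mem_uIoo_iff_xor (h : a ⋖ b) (hxa : x ≠ a) (hxb : x ≠ b) (hxc : x ≠ c)
    (hxd : x ≠ d) : x ∈ uIoo c d ↔ Xor (x ∈ uIoo a c) (x ∈ uIoo b d) := by
  rw [Set.mem_uIoo_iff_xor hxc hxd, Set.mem_uIoo_iff_xor hxa hxc, Set.mem_uIoo_iff_xor hxb hxd,
    h.left_lt_iff_right_lt hxb]
  unfold Xor
  tauto

end Chords

/-- `τ` arises from the matching `σ` by replacing its pairs `{a, σ a}` and `{b, σ b}` with
`{a, b}` and `{σ a, σ b}`. -/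
structure IsRepair {α : Type*} (σ : α → α) (a b : α) (τ : α → α) : Prop where
  apply_left : τ a = b
  apply_right : τ b = a
  apply_partner_left : τ (σ a) = σ b
  apply_partner_right : τ (σ b) = σ a
  apply_of_ne : ∀ k, k ≠ a → k ≠ b → k ≠ σ a → k ≠ σ b → τ k = σ k

def IsNested {α : Type*} [LinearOrder α] (σ : α → α) : Prop :=
  ∀ i, MapsTo σ (uIoo i (σ i)) (uIoo i (σ i))

theorem IsNested.mem_uIoo_iff {α : Type*} [LinearOrder α] {σ : α → α} (hn : IsNested σ)
    (hσ : Involutive σ) {i j : α} : σ j ∈ uIoo i (σ i) ↔ j ∈ uIoo i (σ i) :=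
  ⟨fun hj => hσ j ▸ hn i hj, (hn i ·)⟩

theorem Function.Involutive.equivalence_eq_or_eq_apply {β : Type*} {f : β → β}
    (hf : Involutive f) : Equivalence (fun x y => x = y ∨ x = f y) where
  refl _ := .inl rfl
  symm := by
    rintro x y (rfl | rfl)
    exacts [.inl rfl, .inr (hf y).symm]
  trans := by
    rintro x y z (rfl | rfl) (rfl | rfl)
    exacts [.inl rfl, .inr rfl, .inr rfl, .inl (hf z)]

namespace IsRepair

variable {α : Type*} {σ τ : α → α} {a b : α}

theorem forall_apply (h : IsRepair σ a b τ) {P : α → α → Prop} (hab : P a b) (hba : P b a)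
    (hσab : P (σ a) (σ b)) (hσba : P (σ b) (σ a))
    (hσ : ∀ k, k ≠ a → k ≠ b → k ≠ σ a → k ≠ σ b → P k (σ k)) (k : α) : P k (τ k) := by
  rcases eq_or_ne k a with rfl | hka
  · rwa [h.apply_left]
  rcases eq_or_ne k b with rfl | hkb
  · rwa [h.apply_right]
  rcases eq_or_ne k (σ a) with rfl | hkσa
  · rwa [h.apply_partner_left]
  rcases eq_or_ne k (σ b) with rfl | hkσb
  · rwa [h.apply_partner_right]
  rw [h.apply_of_ne k hka hkb hkσa hkσb]
  exact hσ k hka hkb hkσa hkσb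

theorem involutive (h : IsRepair σ a b τ) (hσ : Involutive σ) : Involutive τ := by
  refine h.forall_apply (P := fun k m => τ m = k) h.apply_right h.apply_left
    h.apply_partner_right h.apply_partner_left fun k hka hkb hkσa hkσb => ?_
  rw [h.apply_of_ne (σ k) (fun h => hkσa (hσ.eq_iff.1 h)) (fun h => hkσb (hσ.eq_iff.1 h))
    (hσ.injective.ne hka) (hσ.injective.ne hkb), hσ k]

theorem apply_ne (h : IsRepair σ a b τ) (hσ : Involutive σ) (hfix : ∀ k, σ k ≠ k)
    (hab : a ≠ b) (k : α) : τ k ≠ k :=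
  h.forall_apply (P := fun k m => m ≠ k) hab.symm hab (hσ.injective.ne hab.symm)
    (hσ.injective.ne hab) (fun k _ _ _ _ => hfix k) k

theorem rel {β : Type*} {r : β → β → Prop} (h : IsRepair σ a b τ) (hr : Equivalence r)
    {g : α → β} (hσ : ∀ k, r (g (σ k)) (g k)) (hab : r (g b) (g a)) (k : α) :
    r (g (τ k)) (g k) := by
  have hσab : r (g (σ b)) (g (σ a)) := hr.trans (hσ b) (hr.trans hab (hr.symm (hσ a)))
  exact h.forall_apply (P := fun k m => r (g m) (g k)) hab (hr.symm hab) hσab (hr.symm hσab)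
    (fun k _ _ _ _ => hσ k) k

section Nesting

variable [LinearOrder α]

theorem mapsTo_uIoo_partners (h : IsRepair σ a b τ) (hab : a ⋖ b) (hσ : Involutive σ)
    (hfix : ∀ k, σ k ≠ k) (hn : IsNested σ) :
    MapsTo τ (uIoo (σ a) (σ b)) (uIoo (σ a) (σ b)) := by
  have hσa : σ a ∉ uIoo (σ a) (σ b) := left_notMem_uIoo
  have hσb : σ b ∉ uIoo (σ a) (σ b) := right_notMem_uIoo
  intro j
  refine h.forall_apply (P := fun j m => j ∈ uIoo (σ a) (σ b) → m ∈ uIoo (σ a) (σ b))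
    (fun ha => ?_) (fun hb => ?_) (absurd · hσa) (absurd · hσb)
    (fun k hka hkb hkσa hkσb hk => ?_) j
  · refine (hab.mem_uIoo_iff (ne_of_mem_of_not_mem ha hσa) (ne_of_mem_of_not_mem ha hσb)
      (fun e => ne_of_mem_of_not_mem ha hσb (by rw [e, hσ])) (hfix b).symm).1 ha
  · refine (hab.mem_uIoo_iff (hfix a).symm (fun e => ne_of_mem_of_not_mem hb hσa (by rw [e, hσ]))
      (ne_of_mem_of_not_mem hb hσa) (ne_of_mem_of_not_mem hb hσb)).2 hb
  · rw [hab.mem_uIoo_iff_xor hka hkb hkσa hkσb] at hk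
    rwa [hab.mem_uIoo_iff_xor (fun e => hkσa (hσ.eq_iff.1 e)) (fun e => hkσb (hσ.eq_iff.1 e))
      (hσ.injective.ne hka) (hσ.injective.ne hkb), hn.mem_uIoo_iff hσ, hn.mem_uIoo_iff hσ]

theorem mapsTo_uIoo_of_ne (h : IsRepair σ a b τ) (hab : a ⋖ b) (hσ : Involutive σ)
    (hn : IsNested σ) {i : α} (hia : i ≠ a) (hib : i ≠ b) (hσia : σ i ≠ a)
    (hσib : σ i ≠ b) :
    MapsTo τ (uIoo i (σ i)) (uIoo i (σ i)) := by
  have hmem := hab.mem_uIoo_iff hia.symm hσia.symm hib.symm hσib.symm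
  intro j
  exact h.forall_apply (P := fun j m => j ∈ uIoo i (σ i) → m ∈ uIoo i (σ i)) hmem.1 hmem.2
    (fun hj => (hn.mem_uIoo_iff hσ).2 (hmem.1 ((hn.mem_uIoo_iff hσ).1 hj)))
    (fun hj => (hn.mem_uIoo_iff hσ).2 (hmem.2 ((hn.mem_uIoo_iff hσ).1 hj)))
    (fun _ _ _ _ _ hk => hn i hk) j

theorem isNested (h : IsRepair σ a b τ) (hab : a ⋖ b) (hσ : Involutive σ)
    (hfix : ∀ k, σ k ≠ k) (hn : IsNested σ) : IsNested τ := by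
  have hempty : uIoo a b = ∅ := by rw [uIoo_of_lt hab.lt, hab.Ioo_eq]
  intro i
  refine h.forall_apply (P := fun i m => MapsTo τ (uIoo i m) (uIoo i m)) ?_ ?_ ?_ ?_
    (fun k hka hkb hkσa hkσb => h.mapsTo_uIoo_of_ne hab hσ hn hka hkb
      (fun e => hkσa (hσ.eq_iff.1 e)) (fun e => hkσb (hσ.eq_iff.1 e))) i
  · rw [hempty]; exact mapsTo_empty _ _
  · rw [uIoo_comm, hempty]; exact mapsTo_empty _ _
  · exact h.mapsTo_uIoo_partners hab hσ hfix hn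
  · rw [uIoo_comm]; exact h.mapsTo_uIoo_partners hab hσ hfix hn

end Nesting

end IsRepair

theorem ADLetter.inv_involutive : Involutive ADLetter.inv := by
  intro x; cases x <;> rfl

theorem palindromePattern_repair_general (w : List ADLetter)
    (ι : Equiv.Perm (Fin w.length)) (hι : IsPalPattern w ι)
    (i0 j0 : Fin w.length) (hadj : (j0 : ℕ) = (i0 : ℕ) + 1)
    (hletter : w.get j0 = w.get i0 ∨ w.get j0 = (w.get i0).inv)
    (ιnew : Equiv.Perm (Fin w.length))
    (h1 : ιnew i0 = j0) (h2 : ιnew j0 = i0)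
    (h3 : ιnew (ι i0) = ι j0) (h4 : ιnew (ι j0) = ι i0)
    (h5 : ∀ k, k ≠ i0 → k ≠ j0 → k ≠ ι i0 → k ≠ ι j0 → ιnew k = ι k) :
    IsPalPattern w ιnew := by
  obtain ⟨hfix, hinv, hlet, hnest⟩ := hι
  have hι : Involutive ι := hinv
  have hrep : IsRepair ι i0 j0 ιnew := ⟨h1, h2, h3, h4, h5⟩
  have hcov : i0 ⋖ j0 := Fin.covBy_iff.2 (Nat.covBy_iff_add_one_eq.2 hadj.symm)
  have hnew := hrep.isNested hcov hι hfix fun i j hj => hnest i j hj.1 hj.2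
  exact ⟨hrep.apply_ne hι hfix hcov.ne, hrep.involutive hι,
    hrep.rel ADLetter.inv_involutive.equivalence_eq_or_eq_apply hlet hletter,
    fun i j hj hj' => hnew i ⟨hj, hj'⟩⟩

/-- repairing a palindrome-pattern along an adjacent matching pair `i₀, j₀ = i₀+1`
which is not already an `ι`-pair yields again a palindrome-pattern. -/
theorem palindromePattern_repair (w : List ADLetter)
    (ι : Equiv.Perm (Fin w.length)) (hι : IsPalPattern w ι)
    (i0 j0 : Fin w.length) (hadj : (j0 : ℕ) = (i0 : ℕ) + 1)
    (hletter : w.get j0 = w.get i0 ∨ w.get j0 = (w.get i0).inv)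
    (hpair : ι i0 ≠ j0)
    (ιnew : Equiv.Perm (Fin w.length))
    (h1 : ιnew i0 = j0) (h2 : ιnew j0 = i0)
    (h3 : ιnew (ι i0) = ι j0) (h4 : ιnew (ι j0) = ι i0)
    (h5 : ∀ k, k ≠ i0 → k ≠ j0 → k ≠ ι i0 → k ≠ ι j0 → ιnew k = ι k) :
    IsPalPattern w ιnew :=
  palindromePattern_repair_general w ι hι i0 j0 hadj hletter ιnew h1 h2 h3 h4 h5
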